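/- arXiv:1408.3875 — 2 statements merged into one kernel-verified Lean document; each statement's English description precedes it below -/
import Mathlib

section
/- For every positive integer N, spt_{2,3}(N) equals the coefficient of q^N in the formal power series ∑_{m≥1} q^m · (1−q^m)^{-2} · (∏_{j=m+1}^{2m−1}(1−q^j))^{-1} · (∏_{k≥0}(1−q^{3m+3k}))^{-1} ∈ ℚ⟦q⟧. (The sum converges coefficient-wise since the m-th summand is divisible by q^m, and each factor 1−q^j with j ≥ 1 is a unit of ℚ⟦q⟧.) -/
open Finset
open scoped Classical

/-- The smallest part of a partition of `n` (for `n ≥ 1` the parts are nonempty). -/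
noncomputable def minPart {n : ℕ} (P : n.Partition) : ℕ := sInf {k | k ∈ P.parts}

/-- The largest part of a partition of `n`. -/
def maxPart {n : ℕ} (P : n.Partition) : ℕ := P.parts.sup

/-- The rank of a partition: largest part minus number of parts. -/
def rank {n : ℕ} (P : n.Partition) : ℤ := (maxPart P : ℤ) - (Multiset.card P.parts : ℤ)

/-- `N(m,n)`: the number of partitions of `n` with rank `m`. -/
noncomputable def Nrank (m : ℤ) (n : ℕ) : ℕ := Nat.card {P : n.Partition // rank P = m}

/-- The second Atkin–Garvan moment `N₂(n) = ∑_{m ∈ ℤ} m² N(m,n)`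
(ranks of partitions of `n` all lie in `[-n, n]`). -/
noncomputable def N2 (n : ℕ) : ℤ := ∑ m ∈ Finset.Icc (-(n : ℤ)) (n : ℤ), m ^ 2 * Nrank m n

/-- Number of appearances of the smallest part in a partition. -/
noncomputable def sptCount {n : ℕ} (P : n.Partition) : ℕ := Multiset.count (minPart P) P.parts

/-- Andrews' smallest parts function. -/
noncomputable def spt (n : ℕ) : ℕ := ∑ P : n.Partition, sptCount P

/-- The condition defining `spt_{2,3}`: every part is `<` twice the smallest part, or is a
multiple of `3` that is at least thrice the smallest part. -/
def Allowed {n : ℕ} (P : n.Partition) : Prop :=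
  ∀ part ∈ P.parts, part < 2 * minPart P ∨ (3 ∣ part ∧ 3 * minPart P ≤ part)

/-- `spt_{2,3}(n)`. -/
noncomputable def spt23 (n : ℕ) : ℕ :=
  ∑ P : n.Partition, if Allowed P then sptCount P else 0

/-- The number of partitions of `n`. -/
noncomputable def pFun (n : ℕ) : ℕ := Nat.card n.Partition

/-- The number of partitions of `n` into parts divisible by 3. -/
noncomputable def p3 (n : ℕ) : ℕ := Nat.card {P : n.Partition // ∀ part ∈ P.parts, 3 ∣ part}

/-- Sum of divisors. -/
def sigma1 (n : ℕ) : ℕ := ∑ d ∈ n.divisors, d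

/-- `R(k)`: number of `(x,y,u,v) ∈ ℤ⁴` with `x² + xy + y² + u² + uv + v² = k`. -/
noncomputable def R (k : ℕ) : ℕ :=
  Set.ncard {w : ℤ × ℤ × ℤ × ℤ |
    w.1 ^ 2 + w.1 * w.2.1 + w.2.1 ^ 2 + w.2.2.1 ^ 2 + w.2.2.1 * w.2.2.2 + w.2.2.2 ^ 2 = (k : ℤ)}

/-- `P₃(n) = ∑_{k=1}^n R(k) p₃(n-k)`. -/
noncomputable def P3 (n : ℕ) : ℕ := ∑ k ∈ Finset.Icc 1 n, R k * p3 (n - k)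

open PowerSeries in
/-- `∑_{n ≥ 1} f n`, well-defined coefficientwise when `q^n ∣ f n`: the `N`-th coefficient
only receives contributions from `f n` with `1 ≤ n ≤ N`. -/
noncomputable def seriesSum (f : ℕ → PowerSeries ℚ) : PowerSeries ℚ :=
  PowerSeries.mk fun N => ∑ n ∈ Finset.Icc 1 N, PowerSeries.coeff (R := ℚ) N (f n)

open PowerSeries in
/-- The infinite product `∏_{k ≥ 0} (1 - q^(b + s k))` (for `b, s ≥ 1`): its `N`-th
coefficient agrees with that of any truncation `∏_{k < M} (1 - q^(b+sk))` with `M > N`. -/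
noncomputable def pochInf (b s : ℕ) : PowerSeries ℚ :=
  PowerSeries.mk fun N =>
    PowerSeries.coeff (R := ℚ) N (∏ k ∈ Finset.range (N + 1), (1 - (X : PowerSeries ℚ) ^ (b + s * k)))

open PowerSeries in
/-- `(q;q)_m = ∏_{j=1}^m (1 - q^j)`. -/
noncomputable def qPoch (m : ℕ) : PowerSeries ℚ := ∏ j ∈ Finset.Icc 1 m, (1 - (X : PowerSeries ℚ) ^ j)

namespace SPT
open PowerSeries

lemma part_le {n : ℕ} (P : n.Partition) {p : ℕ} (hp : p ∈ P.parts) : p ≤ n := by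
  rw [← P.parts_sum]
  exact Multiset.single_le_sum (fun x _ => Nat.zero_le x) p hp

lemma parts_nonempty {n : ℕ} (hn : 0 < n) (P : n.Partition) : {k | k ∈ P.parts}.Nonempty := by
  have h0 : P.parts ≠ 0 := by
    intro h
    rw [← P.parts_sum, h] at hn
    simp at hn
  rcases Multiset.exists_mem_of_ne_zero h0 with ⟨a, ha⟩
  exact ⟨a, ha⟩

lemma minPart_mem {n : ℕ} (hn : 0 < n) (P : n.Partition) : minPart P ∈ P.parts :=
  Nat.sInf_mem (parts_nonempty hn P)

lemma minPart_le {n : ℕ} (P : n.Partition) {p : ℕ} (hp : p ∈ P.parts) : minPart P ≤ p :=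
  Nat.sInf_le hp

lemma minPart_eq {n : ℕ} (P : n.Partition) {m : ℕ} (hm : m ∈ P.parts)
    (h : ∀ p ∈ P.parts, m ≤ p) : minPart P = m :=
  le_antisymm (Nat.sInf_le hm) (le_csInf ⟨m, hm⟩ fun p hp => h p hp)

noncomputable def cnt (S : Set ℕ) (n : ℕ) : ℕ :=
  (Finset.univ.filter (fun P : n.Partition => ∀ p ∈ P.parts, p ∈ S)).card

noncomputable def CS (S : Set ℕ) : PowerSeries ℚ := PowerSeries.mk fun n => (cnt S n : ℚ)

lemma coeff_CS (S : Set ℕ) (n : ℕ) : PowerSeries.coeff (R := ℚ) n (CS S) = (cnt S n : ℚ) := by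
  simp [CS]

lemma cnt_zero (S : Set ℕ) : cnt S 0 = 1 := by
  rw [cnt]
  rw [Finset.filter_true_of_mem]
  · simp
  · intro P _ p hp
    have h1 := P.parts_pos hp
    have h2 := part_le P hp
    exact absurd h1 (by omega)

lemma cnt_eq_zero {S : Set ℕ} {n : ℕ} (hn : 0 < n) (h : ∀ s ∈ S, n < s) : cnt S n = 0 := by
  rw [cnt, Finset.card_eq_zero, Finset.filter_eq_empty_iff]
  intro P _ hP
  rcases parts_nonempty hn P with ⟨a, ha⟩
  have := h a (hP a ha)
  have := part_le P ha
  omega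

lemma constantCoeff_CS (S : Set ℕ) : PowerSeries.constantCoeff (R := ℚ) (CS S) = 1 := by
  have := coeff_CS S 0
  rw [PowerSeries.coeff_zero_eq_constantCoeff] at this
  rw [this, cnt_zero]
  norm_num

lemma CS_empty : CS (∅ : Set ℕ) = 1 := by
  ext n
  rw [coeff_CS, PowerSeries.coeff_one]
  rcases Nat.eq_zero_or_pos n with rfl | hn
  · simp [cnt_zero]
  · rw [cnt_eq_zero hn (by simp), if_neg (by omega)]
    simp

lemma card_with_part {S : Set ℕ} {d n : ℕ} (hd : 0 < d) (hdn : d ≤ n) (hdS : d ∈ S) :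
    (Finset.univ.filter
      (fun P : n.Partition => (∀ p ∈ P.parts, p ∈ S) ∧ d ∈ P.parts)).card = cnt S (n - d) := by
  rw [cnt]
  refine Finset.card_bij'
    (fun P hP => Nat.Partition.mk (P.parts.erase d)
      (fun {i} hi => P.parts_pos (Multiset.mem_of_mem_erase hi))
      (by
        have hdP : d ∈ P.parts := (Finset.mem_filter.mp hP).2.2
        have hc := Multiset.cons_erase hdP
        have hsum : d + (P.parts.erase d).sum = n := by
          conv_rhs => rw [← P.parts_sum, ← hc]
          rw [Multiset.sum_cons]
        omega))
    (fun Q hQ => Nat.Partition.mk (d ::ₘ Q.parts)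
      (fun {i} hi => by
        rcases Multiset.mem_cons.mp hi with rfl | h
        · exact hd
        · exact Q.parts_pos h)
      (by rw [Multiset.sum_cons, Q.parts_sum]; omega))
    ?_ ?_ ?_ ?_
  · intro P hP
    simp only [Finset.mem_filter, Finset.mem_univ, true_and] at hP ⊢
    intro p hp
    exact hP.1 p (Multiset.mem_of_mem_erase hp)
  · intro Q hQ
    simp only [Finset.mem_filter, Finset.mem_univ, true_and] at hQ ⊢
    refine ⟨?_, Multiset.mem_cons_self d _⟩
    intro p hp
    rcases Multiset.mem_cons.mp hp with rfl | h
    · exact hdS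
    · exact hQ p h
  · intro P hP
    apply Nat.Partition.ext
    simp only
    exact Multiset.cons_erase (Finset.mem_filter.mp hP).2.2
  · intro Q hQ
    apply Nat.Partition.ext
    simp only
    exact Multiset.erase_cons_head d Q.parts

lemma L1 {S : Set ℕ} {d : ℕ} (hd : 0 < d) (hdS : d ∈ S) :
    (1 - (X : PowerSeries ℚ)^d) * CS S = CS (S \ {d}) := by
  ext n
  rw [sub_mul, one_mul, map_sub, coeff_CS, coeff_CS, PowerSeries.coeff_X_pow_mul']
  have hsplit : cnt (S \ {d}) n +
      (Finset.univ.filter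
        (fun P : n.Partition => (∀ p ∈ P.parts, p ∈ S) ∧ d ∈ P.parts)).card = cnt S n := by
    rw [cnt, cnt]
    have h1 := Finset.card_filter_add_card_filter_not
      (s := Finset.univ.filter (fun P : n.Partition => ∀ p ∈ P.parts, p ∈ S))
      (p := fun P => d ∈ P.parts)
    rw [Finset.filter_filter, Finset.filter_filter] at h1
    rw [← h1, add_comm]
    congr 2
    ext P
    simp only [Finset.mem_filter, Finset.mem_univ, true_and, Set.mem_diff,
      Set.mem_singleton_iff]
    constructor
    · intro h
      exact ⟨fun p hp => (h p hp).1, fun hdP => (h d hdP).2 rfl⟩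
    · intro ⟨h1, h2⟩ p hp
      exact ⟨h1 p hp, fun hpd => h2 (hpd ▸ hp)⟩
  by_cases hdn : d ≤ n
  · rw [if_pos hdn, coeff_CS, ← card_with_part hd hdn hdS, ← hsplit]
    push_cast
    ring
  · rw [if_neg hdn]
    have hzero : (Finset.univ.filter
        (fun P : n.Partition => (∀ p ∈ P.parts, p ∈ S) ∧ d ∈ P.parts)).card = 0 := by
      rw [Finset.card_eq_zero, Finset.filter_eq_empty_iff]
      intro P _ ⟨_, hdP⟩
      exact hdn (part_le P hdP)
    rw [hzero, add_zero] at hsplit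
    rw [hsplit]
    ring

lemma L2 (t : Finset ℕ) {S : Set ℕ} (ht : ∀ j ∈ t, 0 < j) (hts : ↑t ⊆ S) :
    (∏ j ∈ t, (1 - (X : PowerSeries ℚ)^j)) * CS S = CS (S \ ↑t) := by
  induction t using Finset.induction_on with
  | empty => simp
  | @insert a s ha ih =>
    have hsub : (↑s : Set ℕ) ⊆ S := fun x hx => hts (by
      simp only [Finset.coe_insert, Set.mem_insert_iff]
      exact Or.inr hx)
    have hset : S \ ↑(insert a s) = (S \ ↑s) \ {a} := by
      ext x
      simp only [Finset.coe_insert, Set.mem_insert_iff, Set.mem_diff, Set.mem_singleton_iff,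
        Finset.mem_coe]
      tauto
    rw [hset, Finset.prod_insert ha, mul_assoc,
      ih (fun j hj => ht j (Finset.mem_insert_of_mem hj)) hsub,
      L1 (ht a (Finset.mem_insert_self a s))
        ((Set.mem_diff _).mpr ⟨hts (by simp), by simpa using ha⟩)]


lemma constCoeff_one_sub_pow {j : ℕ} (hj : 0 < j) :
    PowerSeries.constantCoeff (R := ℚ) (1 - (X : PowerSeries ℚ)^j) = 1 := by
  rw [map_sub, map_one, map_pow, PowerSeries.constantCoeff_X, zero_pow (by omega), sub_zero]

lemma constCoeff_prod (t : Finset ℕ) (ht : ∀ j ∈ t, 0 < j) :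
    PowerSeries.constantCoeff (R := ℚ) (∏ j ∈ t, (1 - (X : PowerSeries ℚ)^j)) = 1 := by
  rw [map_prod]
  exact Finset.prod_eq_one fun j hj => constCoeff_one_sub_pow (ht j hj)

lemma prod_ne_zero (t : Finset ℕ) (ht : ∀ j ∈ t, 0 < j) :
    (∏ j ∈ t, (1 - (X : PowerSeries ℚ)^j)) ≠ 0 := by
  intro h
  have := constCoeff_prod t ht
  rw [h, map_zero] at this
  norm_num at this

lemma L3 (t : Finset ℕ) (ht : ∀ j ∈ t, 0 < j) :
    (∏ j ∈ t, (1 - (X : PowerSeries ℚ)^j))⁻¹ = CS ↑t := by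
  rw [PowerSeries.inv_eq_iff_mul_eq_one (by rw [constCoeff_prod t ht]; norm_num)]
  rw [mul_comm, L2 t ht (le_refl _), Set.diff_self, CS_empty]

lemma M1 (t : Finset ℕ) (S : Set ℕ) (ht : ∀ j ∈ t, 0 < j) (hdisj : ∀ j ∈ t, j ∉ S) :
    CS ↑t * CS S = CS (↑t ∪ S) := by
  have hset : (↑t ∪ S) \ ↑t = S := by
    ext x
    simp only [Set.mem_diff, Set.mem_union, Finset.mem_coe]
    constructor
    · rintro ⟨h1 | h1, h2⟩
      · exact absurd h1 h2
      · exact h1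
    · intro h
      exact ⟨Or.inr h, fun hx => hdisj x hx h⟩
  apply mul_left_cancel₀ (prod_ne_zero t ht)
  rw [← mul_assoc, L2 t ht (le_refl _), Set.diff_self, CS_empty, one_mul,
    L2 t ht Set.subset_union_left, hset]

def APset (m : ℕ) : Set ℕ := {j | 3 ∣ j ∧ 3 * m ≤ j}

lemma coeff_one_sub_pow_mul {d a : ℕ} (hda : a < d) (F : PowerSeries ℚ) :
    PowerSeries.coeff (R := ℚ) a ((1 - (X : PowerSeries ℚ)^d) * F) = PowerSeries.coeff (R := ℚ) a F := by
  rw [sub_mul, one_mul, map_sub, PowerSeries.coeff_X_pow_mul', if_neg (by omega), sub_zero]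

lemma coeff_prod_trunc {m a M M' : ℕ} (hm : 0 < m) (hM : a < M) (hMM' : M ≤ M') :
    PowerSeries.coeff (R := ℚ) a (∏ k ∈ Finset.range M', (1 - (X : PowerSeries ℚ)^(3*m+3*k)))
      = PowerSeries.coeff (R := ℚ) a (∏ k ∈ Finset.range M, (1 - (X : PowerSeries ℚ)^(3*m+3*k))) := by
  induction M', hMM' using Nat.le_induction with
  | base => rfl
  | succ n hn ih =>
    rw [Finset.prod_range_succ, mul_comm, coeff_one_sub_pow_mul (by omega), ih]

lemma constCoeff_pochInf {m : ℕ} (hm : 0 < m) :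
    PowerSeries.constantCoeff (R := ℚ) (pochInf (3*m) 3) = 1 := by
  rw [← PowerSeries.coeff_zero_eq_constantCoeff]
  rw [pochInf, PowerSeries.coeff_mk, Finset.prod_range_one, mul_zero, add_zero,
    PowerSeries.coeff_zero_eq_constantCoeff, constCoeff_one_sub_pow (by omega)]

lemma L4 {m : ℕ} (hm : 0 < m) : (pochInf (3*m) 3)⁻¹ = CS (APset m) := by
  rw [PowerSeries.inv_eq_iff_mul_eq_one (by rw [constCoeff_pochInf hm]; norm_num)]
  ext N
  rw [PowerSeries.coeff_mul]
  have hstep : ∀ p ∈ Finset.HasAntidiagonal.antidiagonal N,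
      PowerSeries.coeff (R := ℚ) p.1 (CS (APset m)) * PowerSeries.coeff (R := ℚ) p.2 (pochInf (3*m) 3)
      = PowerSeries.coeff (R := ℚ) p.1 (CS (APset m)) *
        PowerSeries.coeff (R := ℚ) p.2 (∏ k ∈ Finset.range (N+1), (1 - (X : PowerSeries ℚ)^(3*m+3*k))) := by
    intro p hp
    have hp2 : p.2 ≤ N := by
      have := Finset.HasAntidiagonal.mem_antidiagonal.mp hp
      omega
    rw [pochInf, PowerSeries.coeff_mk]
    rw [← coeff_prod_trunc hm (Nat.lt_succ_self p.2) (show p.2 + 1 ≤ N + 1 by omega)]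
  rw [Finset.sum_congr rfl hstep, ← PowerSeries.coeff_mul, mul_comm]
  have himg : (∏ k ∈ Finset.range (N+1), (1 - (X : PowerSeries ℚ)^(3*m+3*k)))
      = ∏ j ∈ (Finset.range (N+1)).image (fun k => 3*m+3*k), (1 - (X : PowerSeries ℚ)^j) := by
    rw [Finset.prod_image]
    intro a _ b _ h
    beta_reduce at h
    omega
  rw [himg, L2 _ (by
      intro j hj
      rcases Finset.mem_image.mp hj with ⟨k, _, rfl⟩
      omega)
    (by
      intro j hj
      rcases Finset.mem_image.mp (by exact_mod_cast hj) with ⟨k, _, rfl⟩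
      exact ⟨⟨m + k, by ring⟩, by omega⟩)]
  rw [coeff_CS, PowerSeries.coeff_one]
  rcases Nat.eq_zero_or_pos N with rfl | hN
  · rw [cnt_zero, if_pos rfl]
    norm_num
  · rw [cnt_eq_zero hN, if_neg (by omega)]
    · norm_num
    · intro s hs
      obtain ⟨⟨hdvd, hle⟩, hnot⟩ := hs
      obtain ⟨u, rfl⟩ := hdvd
      by_contra hcon
      push_neg at hcon
      apply hnot
      simp only [Finset.coe_image, Set.mem_image, Finset.coe_range, Set.mem_Iio]
      exact ⟨u - m, by omega, by omega⟩

lemma cnt_singleton {m : ℕ} (hm : 0 < m) (n : ℕ) :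
    cnt ({m} : Set ℕ) n = if m ∣ n then 1 else 0 := by
  rw [cnt]
  split_ifs with h
  · obtain ⟨k, rfl⟩ := h
    rw [Finset.card_eq_one]
    refine ⟨Nat.Partition.mk (Multiset.replicate k m)
      (fun {i} hi => by rw [Multiset.eq_of_mem_replicate hi]; exact hm)
      (by rw [Multiset.sum_replicate, smul_eq_mul, mul_comm]), ?_⟩
    ext P
    simp only [Finset.mem_filter, Finset.mem_univ, true_and, Finset.mem_singleton,
      Set.mem_singleton_iff]
    constructor
    · intro hall
      have hrep : P.parts = Multiset.replicate (Multiset.card P.parts) m :=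
        Multiset.eq_replicate_card.mpr hall
      have hsum := P.parts_sum
      rw [hrep, Multiset.sum_replicate, smul_eq_mul] at hsum
      have hck : Multiset.card P.parts = k :=
        Nat.eq_of_mul_eq_mul_left hm (by rw [mul_comm m _, hsum])
      apply Nat.Partition.ext
      rw [hrep, hck]
    · rintro rfl
      intro p hp
      exact Multiset.eq_of_mem_replicate hp
  · rw [Finset.card_eq_zero, Finset.eq_empty_iff_forall_notMem]
    intro P hP
    simp only [Finset.mem_filter, Finset.mem_univ, true_and] at hP
    have hall := hP
    apply h
    have hrep : P.parts = Multiset.replicate (Multiset.card P.parts) m :=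
      Multiset.eq_replicate_card.mpr hall
    have hsum := P.parts_sum
    rw [hrep, Multiset.sum_replicate, smul_eq_mul] at hsum
    exact Dvd.intro_left _ hsum

lemma card_multiples (m k : ℕ) :
    ((Finset.range (k+1)).filter (fun i => m ∣ i)).card = k / m + 1 := by
  have hins : Finset.range (k+1) = insert 0 (Finset.Ioc 0 k) := by
    ext x
    simp only [Finset.mem_range, Finset.mem_insert, Finset.mem_Ioc]
    omega
  rw [hins, Finset.filter_insert, if_pos (dvd_zero m),
    Finset.card_insert_of_notMem (by simp), Nat.Ioc_filter_dvd_card_eq_div]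

lemma sum_indicator_antidiagonal {m : ℕ} (hm : 0 < m) (k : ℕ) :
    (∑ p ∈ Finset.HasAntidiagonal.antidiagonal k,
      (if m ∣ p.1 then (1:ℚ) else 0) * (if m ∣ p.2 then (1:ℚ) else 0))
      = if m ∣ k then ((k / m : ℕ) + 1 : ℚ) else 0 := by
  rw [Finset.Nat.sum_antidiagonal_eq_sum_range_succ_mk]
  split_ifs with h
  · have hcongr : ∀ i ∈ Finset.range (k+1),
        (if m ∣ i then (1:ℚ) else 0) * (if m ∣ (k - i) then (1:ℚ) else 0)
          = if m ∣ i then (1:ℚ) else 0 := by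
      intro i hi
      by_cases hmi : m ∣ i
      · rw [if_pos hmi, if_pos (Nat.dvd_sub h hmi), mul_one]
      · rw [if_neg hmi, zero_mul]
    rw [Finset.sum_congr rfl hcongr, Finset.sum_boole, card_multiples]
    push_cast
    ring
  · apply Finset.sum_eq_zero
    intro i hi
    by_cases hmi : m ∣ i
    · have hik : i ≤ k := by
        have := Finset.mem_range.mp hi
        omega
      have hnd : ¬ m ∣ (k - i) := by
        intro hd
        apply h
        have : k = i + (k - i) := by omega
        rw [this]
        exact Nat.dvd_add hmi hd
      rw [if_neg hnd, mul_zero]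
    · rw [if_neg hmi, zero_mul]

lemma coeff_CS_singleton_sq {m : ℕ} (hm : 0 < m) (k : ℕ) :
    PowerSeries.coeff (R := ℚ) k (CS {m} * CS {m}) = if m ∣ k then ((k / m : ℕ) + 1 : ℚ) else 0 := by
  rw [PowerSeries.coeff_mul, ← sum_indicator_antidiagonal hm k]
  apply Finset.sum_congr rfl
  intro p hp
  rw [coeff_CS, coeff_CS, cnt_singleton hm, cnt_singleton hm]
  simp [apply_ite (fun x : ℕ => (x : ℚ))]

lemma coeff_Xm_CS2 {m : ℕ} (hm : 0 < m) (i : ℕ) :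
    PowerSeries.coeff (R := ℚ) i ((X : PowerSeries ℚ)^m * (CS {m} * CS {m}))
      = if m ∣ i ∧ 1 ≤ i then ((i / m : ℕ) : ℚ) else 0 := by
  rw [PowerSeries.coeff_X_pow_mul']
  by_cases hmi : m ≤ i
  · rw [if_pos hmi, coeff_CS_singleton_sq hm]
    by_cases hd : m ∣ (i - m)
    · obtain ⟨c, hc⟩ := id hd
      have hi : i = m * (c + 1) := by
        rw [Nat.mul_succ]
        omega
      have h1 : m ∣ i := ⟨c + 1, hi⟩
      rw [if_pos hd, if_pos ⟨h1, by omega⟩]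
      have h2 : (i - m) / m = c := by
        rw [hc, Nat.mul_div_cancel_left _ hm]
      have h3 : i / m = c + 1 := by
        rw [hi, Nat.mul_div_cancel_left _ hm]
      rw [h2, h3]
      push_cast
      ring
    · have hnd : ¬ (m ∣ i ∧ 1 ≤ i) := by
        rintro ⟨⟨c, rfl⟩, h1⟩
        apply hd
        have hc1 : 1 ≤ c := by
          rcases Nat.eq_zero_or_pos c with rfl | hc
          · omega
          · exact hc
        refine ⟨c - 1, ?_⟩
        have hcc : c = (c - 1) + 1 := by omega
        calc m * c - m = m * ((c - 1) + 1) - m := by rw [← hcc]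
          _ = m * (c - 1) + m - m := by rw [Nat.mul_succ]
          _ = m * (c - 1) := by omega
      rw [if_neg hd, if_neg hnd]
  · rw [if_neg hmi]
    have : ¬ (m ∣ i ∧ 1 ≤ i) := by
      rintro ⟨⟨c, rfl⟩, h1⟩
      rcases Nat.eq_zero_or_pos c with rfl | hc
      · omega
      · exact hmi (by nlinarith)
    rw [if_neg this]

def Good (m : ℕ) : Set ℕ := {j | (m ≤ j ∧ j < 2*m) ∨ (3 ∣ j ∧ 3*m ≤ j)}

def Dset (m : ℕ) : Set ℕ := Good m \ {m}

lemma Good_ge {m x : ℕ} (hx : x ∈ Good m) : m ≤ x := by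
  rcases hx with ⟨h1, _⟩ | ⟨_, h2⟩
  · exact h1
  · omega

lemma mem_Good_self {m : ℕ} (hm : 0 < m) : m ∈ Good m := Or.inl ⟨le_refl m, by omega⟩

lemma not_mem_Dset_self {m : ℕ} : m ∉ Dset m := fun h => h.2 rfl

lemma parts_decomp {n : ℕ} (P : n.Partition) (m : ℕ) :
    n = m * Multiset.count m P.parts + (Multiset.filter (fun p => ¬ p = m) P.parts).sum := by
  have h1 : Multiset.filter (fun p => p = m) P.parts
      = Multiset.replicate (Multiset.count m P.parts) m := Multiset.filter_eq' P.parts m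
  have h2 := Multiset.filter_add_not (fun p => p = m) P.parts
  have h3 : P.parts.sum = m * Multiset.count m P.parts
      + (Multiset.filter (fun p => ¬ p = m) P.parts).sum := by
    conv_lhs => rw [← h2]
    rw [Multiset.sum_add, h1, Multiset.sum_replicate, smul_eq_mul, mul_comm]
  rw [P.parts_sum] at h3
  exact h3

lemma count_mul_le {n : ℕ} (P : n.Partition) (m : ℕ) :
    m * Multiset.count m P.parts ≤ n := by
  have := parts_decomp P m
  omega

lemma card_count_eq {m r n : ℕ} (hm : 0 < m) (hr : 0 < r) (hrm : m * r ≤ n) :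
    (Finset.univ.filter (fun P : n.Partition =>
        (∀ p ∈ P.parts, p ∈ Good m) ∧ Multiset.count m P.parts = r)).card
      = cnt (Dset m) (n - m * r) := by
  rw [cnt]
  refine Finset.card_bij'
    (fun P hP => Nat.Partition.mk (P.parts.filter (fun p => ¬ p = m))
      (fun {i} hi => P.parts_pos (Multiset.mem_filter.mp hi).1)
      (by
        have hd := parts_decomp P m
        have hc : Multiset.count m P.parts = r :=
          ((Finset.mem_filter.mp hP).2).2
        rw [hc] at hd
        omega))
    (fun Q hQ => Nat.Partition.mk (Multiset.replicate r m + Q.parts)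
      (fun {i} hi => by
        rcases Multiset.mem_add.mp hi with h | h
        · rw [Multiset.eq_of_mem_replicate h]; exact hm
        · exact Q.parts_pos h)
      (by
        rw [Multiset.sum_add, Multiset.sum_replicate, smul_eq_mul, Q.parts_sum, mul_comm]
        omega))
    ?_ ?_ ?_ ?_
  · intro P hP
    simp only [Finset.mem_filter, Finset.mem_univ, true_and] at hP ⊢
    intro p hp
    have hfp := Multiset.mem_filter.mp hp
    exact ⟨hP.1 p hfp.1, hfp.2⟩
  · intro Q hQ
    simp only [Finset.mem_filter, Finset.mem_univ, true_and] at hQ ⊢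
    constructor
    · intro p hp
      rcases Multiset.mem_add.mp hp with h | h
      · rw [Multiset.eq_of_mem_replicate h]; exact mem_Good_self hm
      · exact (hQ p h).1
    · rw [Multiset.count_add, Multiset.count_replicate_self,
        Multiset.count_eq_zero.mpr (fun h => (hQ m h).2 rfl), add_zero]
  · intro P hP
    simp only [Finset.mem_filter, Finset.mem_univ, true_and] at hP
    apply Nat.Partition.ext
    simp only
    have h1 : Multiset.filter (fun p => p = m) P.parts
        = Multiset.replicate r m := by
      rw [Multiset.filter_eq' P.parts m, hP.2]
    conv_rhs => rw [← Multiset.filter_add_not (fun p => p = m) P.parts]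
    rw [h1]
  · intro Q hQ
    simp only [Finset.mem_filter, Finset.mem_univ, true_and] at hQ
    apply Nat.Partition.ext
    simp only
    rw [Multiset.filter_add]
    have h1 : Multiset.filter (fun p => ¬ p = m) (Multiset.replicate r m) = 0 := by
      rw [Multiset.filter_eq_nil]
      intro a ha
      rw [Multiset.eq_of_mem_replicate ha]
      simp
    have h2 : Multiset.filter (fun p => ¬ p = m) Q.parts = Q.parts :=
      Multiset.filter_eq_self.mpr (fun a ha => (hQ a ha).2)
    rw [h1, h2, zero_add]

noncomputable def Wq (m n : ℕ) : ℚ :=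
  ∑ P : n.Partition,
    if (m ∈ P.parts ∧ ∀ p ∈ P.parts, p ∈ Good m) then (Multiset.count m P.parts : ℚ) else 0

lemma claimA {m : ℕ} (hm : 0 < m) (N i : ℕ) (hiN : i ≤ N) :
    (∑ P : N.Partition, if ((m ∈ P.parts ∧ ∀ p ∈ P.parts, p ∈ Good m)
        ∧ m * Multiset.count m P.parts = i) then (Multiset.count m P.parts : ℚ) else 0)
      = (if m ∣ i ∧ 1 ≤ i then ((i / m : ℕ) : ℚ) else 0) * (cnt (Dset m) (N - i) : ℚ) := by
  by_cases h : m ∣ i ∧ 1 ≤ i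
  · obtain ⟨⟨r, rfl⟩, h1⟩ := h
    have hr : 0 < r := by
      rcases Nat.eq_zero_or_pos r with rfl | hr
      · omega
      · exact hr
    have hcond : ∀ P : N.Partition,
        ((m ∈ P.parts ∧ ∀ p ∈ P.parts, p ∈ Good m) ∧ m * Multiset.count m P.parts = m * r)
          ↔ ((∀ p ∈ P.parts, p ∈ Good m) ∧ Multiset.count m P.parts = r) := by
      intro P
      constructor
      · rintro ⟨⟨hmem, hgood⟩, heq⟩
        exact ⟨hgood, Nat.eq_of_mul_eq_mul_left hm heq⟩
      · rintro ⟨hgood, hcount⟩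
        refine ⟨⟨?_, hgood⟩, by rw [hcount]⟩
        rw [← Multiset.count_pos, hcount]
        exact hr
    have hstep : ∀ P : N.Partition,
        (if ((m ∈ P.parts ∧ ∀ p ∈ P.parts, p ∈ Good m)
          ∧ m * Multiset.count m P.parts = m * r) then (Multiset.count m P.parts : ℚ) else 0)
        = (if ((∀ p ∈ P.parts, p ∈ Good m) ∧ Multiset.count m P.parts = r)
            then (1:ℚ) else 0) * (r : ℚ) := by
      intro P
      by_cases hc : (∀ p ∈ P.parts, p ∈ Good m) ∧ Multiset.count m P.parts = r
      · rw [if_pos ((hcond P).mpr hc), if_pos hc, one_mul, hc.2]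
      · rw [if_neg (fun hh => hc ((hcond P).mp hh)), if_neg hc, zero_mul]
    rw [Finset.sum_congr rfl (fun P _ => hstep P), ← Finset.sum_mul, Finset.sum_boole,
      card_count_eq hm hr hiN]
    rw [if_pos ⟨⟨r, rfl⟩, h1⟩, Nat.mul_div_cancel_left _ hm]
    ring
  · rw [if_neg h, zero_mul]
    apply Finset.sum_eq_zero
    intro P _
    rw [if_neg]
    rintro ⟨⟨hmem, hgood⟩, heq⟩
    apply h
    have hpos : 0 < Multiset.count m P.parts := Multiset.count_pos.mpr hmem
    constructor
    · exact ⟨_, heq.symm⟩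
    · have : m * 1 ≤ m * Multiset.count m P.parts := Nat.mul_le_mul_left m hpos
      omega

lemma Wq_eq_sum {m : ℕ} (hm : 0 < m) (N : ℕ) :
    Wq m N = ∑ i ∈ Finset.range (N+1),
      (if m ∣ i ∧ 1 ≤ i then ((i / m : ℕ) : ℚ) else 0) * (cnt (Dset m) (N - i) : ℚ) := by
  have h1 : (∑ i ∈ Finset.range (N+1),
      (if m ∣ i ∧ 1 ≤ i then ((i / m : ℕ) : ℚ) else 0) * (cnt (Dset m) (N - i) : ℚ))
      = ∑ i ∈ Finset.range (N+1), ∑ P : N.Partition,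
        if ((m ∈ P.parts ∧ ∀ p ∈ P.parts, p ∈ Good m)
          ∧ m * Multiset.count m P.parts = i) then (Multiset.count m P.parts : ℚ) else 0 :=
    Finset.sum_congr rfl (fun i hi => (claimA hm N i (by
      have := Finset.mem_range.mp hi; omega)).symm)
  rw [h1, Finset.sum_comm, Wq]
  apply Finset.sum_congr rfl
  intro P _
  by_cases hc : m ∈ P.parts ∧ ∀ p ∈ P.parts, p ∈ Good m
  · rw [if_pos hc]
    have hmem : m * Multiset.count m P.parts ∈ Finset.range (N+1) := by
      have := count_mul_le P m
      exact Finset.mem_range.mpr (by omega)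
    have hstep : ∀ i ∈ Finset.range (N+1),
        (if ((m ∈ P.parts ∧ ∀ p ∈ P.parts, p ∈ Good m)
          ∧ m * Multiset.count m P.parts = i) then (Multiset.count m P.parts : ℚ) else 0)
        = if i = m * Multiset.count m P.parts then (Multiset.count m P.parts : ℚ) else 0 := by
      intro i _
      by_cases hie : i = m * Multiset.count m P.parts
      · rw [if_pos ⟨hc, hie.symm⟩, if_pos hie]
      · rw [if_neg (fun hh => hie hh.2.symm), if_neg hie]
    rw [Finset.sum_congr rfl hstep, Finset.sum_ite_eq' _ _
      (fun _ => (Multiset.count m P.parts : ℚ)), if_pos hmem]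
  · rw [if_neg hc]
    symm
    apply Finset.sum_eq_zero
    intro i _
    rw [if_neg (fun hh => hc hh.1)]

lemma Wq_coeff {m : ℕ} (hm : 0 < m) (N : ℕ) :
    Wq m N = PowerSeries.coeff (R := ℚ) N
      ((X : PowerSeries ℚ)^m * (CS {m} * CS {m}) * CS (Dset m)) := by
  rw [PowerSeries.coeff_mul, Finset.Nat.sum_antidiagonal_eq_sum_range_succ_mk, Wq_eq_sum hm N]
  apply Finset.sum_congr rfl
  intro i hi
  rw [coeff_Xm_CS2 hm, coeff_CS]

end SPT
namespace SPT
open PowerSeries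

lemma Dset_eq {m : ℕ} (hm : 0 < m) :
    Dset m = ↑(Finset.Icc (m+1) (2*m-1)) ∪ APset m := by
  ext x
  simp only [Dset, Good, APset, Set.mem_diff, Set.mem_setOf_eq, Set.mem_singleton_iff,
    Set.mem_union, Finset.coe_Icc, Set.mem_Icc]
  constructor
  · rintro ⟨h1 | h1, h2⟩
    · left; omega
    · right; exact h1
  · rintro (h | h)
    · exact ⟨Or.inl (by omega), by omega⟩
    · obtain ⟨hd, hle⟩ := h
      exact ⟨Or.inr ⟨hd, hle⟩, by omega⟩

end SPT

open PowerSeries in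
lemma SPT.condW_iff {N : ℕ} (hN : 0 < N) (P : N.Partition) (m : ℕ) :
    (m ∈ P.parts ∧ ∀ p ∈ P.parts, p ∈ SPT.Good m) ↔ (m = minPart P ∧ Allowed P) := by
  constructor
  · rintro ⟨hmem, hgood⟩
    have hmin : minPart P = m := SPT.minPart_eq P hmem (fun p hp => SPT.Good_ge (hgood p hp))
    refine ⟨hmin.symm, ?_⟩
    intro p hp
    rcases hgood p hp with ⟨h1, h2⟩ | h
    · left; rw [hmin]; exact h2
    · right; rw [hmin]; exact h
  · rintro ⟨hmin, hA⟩
    subst hmin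
    have hmem : minPart P ∈ P.parts := SPT.minPart_mem hN P
    refine ⟨hmem, ?_⟩
    intro p hp
    rcases hA p hp with h | h
    · exact Or.inl ⟨SPT.minPart_le P hp, h⟩
    · exact Or.inr h

open PowerSeries in
lemma SPT.lhs_eq (N : ℕ) (hN : 0 < N) :
    (spt23 N : ℚ) = ∑ m ∈ Finset.Icc 1 N, SPT.Wq m N := by
  have h1 : ∀ P : N.Partition, ((if Allowed P then (sptCount P : ℚ) else 0))
      = ∑ m ∈ Finset.Icc 1 N, (if (m ∈ P.parts ∧ ∀ p ∈ P.parts, p ∈ SPT.Good m)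
          then (Multiset.count m P.parts : ℚ) else 0) := by
    intro P
    have hmem : minPart P ∈ Finset.Icc 1 N := by
      have h2 := SPT.minPart_mem hN P
      have h3 := P.parts_pos h2
      have h4 := SPT.part_le P h2
      exact Finset.mem_Icc.mpr ⟨h3, h4⟩
    have h2 : ∀ m ∈ Finset.Icc 1 N, (if (m ∈ P.parts ∧ ∀ p ∈ P.parts, p ∈ SPT.Good m)
          then (Multiset.count m P.parts : ℚ) else 0)
        = if (m = minPart P ∧ Allowed P) then (Multiset.count m P.parts : ℚ) else 0 := by
      intro m _
      by_cases hc : m = minPart P ∧ Allowed P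
      · rw [if_pos ((SPT.condW_iff hN P m).mpr hc), if_pos hc]
      · rw [if_neg (fun hh => hc ((SPT.condW_iff hN P m).mp hh)), if_neg hc]
    rw [Finset.sum_congr rfl h2]
    by_cases hA : Allowed P
    · rw [if_pos hA]
      have h3 : ∀ m ∈ Finset.Icc 1 N,
          (if (m = minPart P ∧ Allowed P) then (Multiset.count m P.parts : ℚ) else 0)
          = if m = minPart P then (Multiset.count m P.parts : ℚ) else 0 := by
        intro m _
        by_cases hc : m = minPart P
        · rw [if_pos ⟨hc, hA⟩, if_pos hc]
        · rw [if_neg (fun hh => hc hh.1), if_neg hc]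
      rw [Finset.sum_congr rfl h3,
        Finset.sum_ite_eq' _ _ (fun m => (Multiset.count m P.parts : ℚ)), if_pos hmem]
      rfl
    · rw [if_neg hA]
      symm
      apply Finset.sum_eq_zero
      intro m _
      rw [if_neg (fun hh => hA hh.2)]
  rw [spt23]
  push_cast
  rw [Finset.sum_congr rfl (fun P _ => h1 P), Finset.sum_comm]
  rfl

open PowerSeries in
/-- `spt_{2,3}(N)` is the `N`-th coefficient of the strange series. -/
theorem spt23_eq_coeff_strange_series (N : ℕ) (hN : 0 < N) :
    (spt23 N : ℚ) =
      PowerSeries.coeff (R := ℚ) N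
        (seriesSum (fun m => (X : PowerSeries ℚ) ^ m * ((1 - (X : PowerSeries ℚ) ^ m)⁻¹) ^ 2 *
          (∏ j ∈ Finset.Icc (m + 1) (2 * m - 1), (1 - (X : PowerSeries ℚ) ^ j))⁻¹ *
          (pochInf (3 * m) 3)⁻¹)) := by
  rw [seriesSum, PowerSeries.coeff_mk, SPT.lhs_eq N hN]
  apply Finset.sum_congr rfl
  intro m hm
  have hm1 : 0 < m := by
    have := Finset.mem_Icc.mp hm
    omega
  have e1 : (1 - (X : PowerSeries ℚ)^m)⁻¹ = SPT.CS ({m} : Set ℕ) := by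
    have h := SPT.L3 ({m} : Finset ℕ) (by
      intro j hj
      simp only [Finset.mem_singleton] at hj
      omega)
    rwa [Finset.prod_singleton, Finset.coe_singleton] at h
  have e2 : (∏ j ∈ Finset.Icc (m + 1) (2 * m - 1), (1 - (X : PowerSeries ℚ) ^ j))⁻¹
      = SPT.CS ↑(Finset.Icc (m+1) (2*m-1)) :=
    SPT.L3 _ (by
      intro j hj
      have := Finset.mem_Icc.mp hj
      omega)
  have e3 : (pochInf (3 * m) 3)⁻¹ = SPT.CS (SPT.APset m) := SPT.L4 hm1
  have e4 : SPT.CS ↑(Finset.Icc (m+1) (2*m-1)) * SPT.CS (SPT.APset m)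
      = SPT.CS (SPT.Dset m) := by
    rw [SPT.M1 _ _ (fun j hj => by
        have := Finset.mem_Icc.mp hj
        omega)
      (fun j hj hj2 => by
        have h1 := Finset.mem_Icc.mp hj
        obtain ⟨hd, hle⟩ := hj2
        omega), ← SPT.Dset_eq hm1]
  rw [SPT.Wq_coeff hm1 N, e1, e2, e3]
  congr 1
  rw [sq, ← e4]
  ring
end

section
/- For every positive integer n, P_3(3n) = ∑_{k=1}^{n} R(3k)·p(n−k). -/
open Finset
open scoped Classical

lemma p3_eq_zero {m : ℕ} (h : ¬ 3 ∣ m) : p3 m = 0 := by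
  rw [p3, Nat.card_eq_zero]
  left
  constructor
  rintro ⟨P, hP⟩
  exact h (P.parts_sum ▸ Multiset.dvd_sum fun x hx => hP x hx)

noncomputable def p3Equiv (m : ℕ) :
    m.Partition ≃ {P : (3 * m).Partition // ∀ part ∈ P.parts, 3 ∣ part} where
  toFun P := ⟨⟨P.parts.map (3 * ·),
      fun {i} hi => by
        obtain ⟨a, ha, rfl⟩ := Multiset.mem_map.mp hi
        have := P.parts_pos ha; omega,
      by
        rw [show ((3 * ·) : ℕ → ℕ) = (fun a => 3 * id a) from rfl,
          Multiset.sum_map_mul_left, Multiset.map_id, P.parts_sum]⟩,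
    fun part hpart => by
      obtain ⟨a, _, rfl⟩ := Multiset.mem_map.mp hpart
      exact ⟨a, rfl⟩⟩
  invFun Q := ⟨Q.1.parts.map (· / 3),
    fun {i} hi => by
      obtain ⟨a, ha, rfl⟩ := Multiset.mem_map.mp hi
      have h3 := Q.2 a ha
      have := Q.1.parts_pos ha
      omega,
    by
      have h : Q.1.parts.map (fun a => 3 * (a / 3)) = Q.1.parts :=
        (Multiset.map_congr rfl fun a ha => Nat.mul_div_cancel' (Q.2 a ha)).trans
          (Multiset.map_id _)
      have h2 : 3 * (Q.1.parts.map (· / 3)).sum = 3 * m := by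
        rw [← Multiset.sum_map_mul_left, h, Q.1.parts_sum]
      omega⟩
  left_inv P := by
    ext1
    simp only [Multiset.map_map, Function.comp]
    rw [Multiset.map_congr rfl fun a _ => Nat.mul_div_cancel_left a (by norm_num),
      Multiset.map_id']
  right_inv Q := by
    apply Subtype.ext
    ext1
    simp only [Multiset.map_map, Function.comp]
    rw [Multiset.map_congr rfl fun a ha => Nat.mul_div_cancel' (Q.2 a ha), Multiset.map_id']

lemma p3_three (m : ℕ) : p3 (3 * m) = pFun m := by
  rw [p3, pFun, Nat.card_congr (p3Equiv m).symm]

/-- `P₃(3n) = ∑_{k=1}^n R(3k) p(n−k)`. -/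
theorem P3_three_mul (n : ℕ) (hn : 0 < n) :
    P3 (3 * n) = ∑ k ∈ Finset.Icc 1 n, R (3 * k) * pFun (n - k) := by
  rw [P3]
  have himg : (Finset.Icc 1 n).image (3 * ·) ⊆ Finset.Icc 1 (3 * n) := by
    intro k hk
    obtain ⟨j, hj, rfl⟩ := Finset.mem_image.mp hk
    simp only [Finset.mem_Icc] at hj ⊢
    omega
  rw [← Finset.sum_subset himg ?_]
  · rw [Finset.sum_image (fun a _ b _ h => by omega)]
    apply Finset.sum_congr rfl
    intro j hj
    simp only [Finset.mem_Icc] at hj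
    rw [show 3 * n - 3 * j = 3 * (n - j) by omega, p3_three]
  · intro k hk hk'
    simp only [Finset.mem_Icc] at hk
    have h3 : ¬ 3 ∣ k := by
      rintro ⟨j, rfl⟩
      exact hk' (Finset.mem_image.mpr ⟨j, Finset.mem_Icc.mpr (by omega), rfl⟩)
    rw [p3_eq_zero (by omega), mul_zero]
end
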